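/- arXiv:2201.11587 — 7 statements merged into one kernel-verified Lean document; each statement's English description precedes it below -/
import Mathlib

section
/- Let a ∈ ℤ^n, b ∈ ℤ, and x ∈ ℝ^n_{≥0} with aᵀx = b. Write each a(i) = s_i Σ_{l ∈ L_i} 2^l and b = s Σ_{l ∈ L} 2^l in binary (with signs s_i, s ∈ {-1,0,1} and sets of exponents L_i, L ⊆ {0,…,N}). Then there exist real numbers c_0, d_0, …, c_{N-1}, d_{N-1} ≥ 0 such that for every bit position l ∈ {0,…,N}: Σ_i 1[l ∈ L_i]·s_i·x(i) + (c_{l-1} - d_{l-1}) - 2(c_l - d_l) = s·1[l ∈ L], where by convention c_{-1} = d_{-1} = 0 and c_N = d_N = 0. Moreover each c_l and d_l can be chosen at most 2·max(‖a‖_max, |b|)·max(1, ‖x‖₁). -/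
open Finset

/-- Bitwise decomposition of a linear equation with bounded carries. -/
theorem stmt_4 {n : ℕ} (a : Fin n → ℤ) (b : ℤ) (x : Fin n → ℝ)
    (hx : 0 ≤ x)
    (heq : ∑ i, (a i : ℝ) * x i = (b : ℝ))
    (N : ℕ) (si : Fin n → ℤ) (Li : Fin n → Finset ℕ) (s : ℤ) (L : Finset ℕ)
    (hsi : ∀ i, si i = (a i).sign) (hsgn : s = b.sign)
    (hLi : ∀ i, Li i ⊆ Finset.range (N + 1)) (hL : L ⊆ Finset.range (N + 1))
    (ha : ∀ i, a i = si i * ∑ l ∈ Li i, (2 : ℤ) ^ l)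
    (hb : b = s * ∑ l ∈ L, (2 : ℤ) ^ l)
    (M : ℝ) (hM : M = max (⨆ i, |(a i : ℝ)|) |(b : ℝ)|) :
    ∃ c d : ℕ → ℝ,
      (∀ l, 0 ≤ c l ∧ 0 ≤ d l) ∧
      c N = 0 ∧ d N = 0 ∧
      (∀ l ∈ Finset.range (N + 1),
        (∑ i, if l ∈ Li i then (si i : ℝ) * x i else 0) +
          (if l = 0 then 0 else c (l - 1) - d (l - 1)) - 2 * (c l - d l) =
        (s : ℝ) * (if l ∈ L then 1 else 0)) ∧
      (∀ l, c l ≤ 2 * M * max 1 (∑ i, |x i|) ∧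
        d l ≤ 2 * M * max 1 (∑ i, |x i|)) := by
  classical
  set S : ℝ := ∑ i, |x i| with hS
  set A : ℕ → ℝ := fun m => ∑ i, if m ∈ Li i then (si i : ℝ) * x i else 0 with hA
  set B : ℕ → ℝ := fun m => (s : ℝ) * (if m ∈ L then 1 else 0) with hB
  set e : ℕ → ℝ := fun l =>
    (∑ m ∈ Finset.range (l + 1), 2 ^ m * (A m - B m)) / 2 ^ (l + 1) with he
  -- sign bounds
  have habs_sign : ∀ z : ℤ, |z.sign| ≤ |z| := by
    intro z
    rcases lt_trichotomy z 0 with h | h | h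
    · rw [Int.sign_eq_neg_one_of_neg h, abs_neg, abs_one, abs_of_neg h]; omega
    · simp [h]
    · rw [Int.sign_eq_one_of_pos h, abs_one, abs_of_pos h]; omega
  have hM0 : 0 ≤ M := by
    rw [hM]; exact le_trans (abs_nonneg _) (le_max_right _ _)
  have hsile : ∀ i, |(si i : ℝ)| ≤ M := by
    intro i
    have h1 : |(si i : ℝ)| ≤ |(a i : ℝ)| := by
      rw [hsi i, ← Int.cast_abs, ← Int.cast_abs]
      exact_mod_cast habs_sign (a i)
    have h2 : |(a i : ℝ)| ≤ ⨆ j, |(a j : ℝ)| :=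
      le_ciSup (f := fun j => |(a j : ℝ)|) (Set.Finite.bddAbove (Set.finite_range _)) i
    rw [hM]; exact le_trans h1 (le_trans h2 (le_max_left _ _))
  have hsle : |(s : ℝ)| ≤ M := by
    have h1 : |(s : ℝ)| ≤ |(b : ℝ)| := by
      rw [hsgn, ← Int.cast_abs, ← Int.cast_abs]
      exact_mod_cast habs_sign b
    rw [hM]; exact le_trans h1 (le_max_right _ _)
  have hS0 : 0 ≤ S := Finset.sum_nonneg fun i _ => abs_nonneg _
  -- bounds on A and B
  have hAm : ∀ m, |A m| ≤ M * S := by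
    intro m
    calc |A m| ≤ ∑ i, |if m ∈ Li i then (si i : ℝ) * x i else 0| :=
          Finset.abs_sum_le_sum_abs _ _
      _ ≤ ∑ i, M * |x i| := by
          apply Finset.sum_le_sum
          intro i _
          split
          · rw [abs_mul]
            exact mul_le_mul_of_nonneg_right (hsile i) (abs_nonneg _)
          · simp only [abs_zero]
            positivity
      _ = M * S := by rw [hS, Finset.mul_sum]
  have hBm : ∀ m, |B m| ≤ M := by
    intro m
    rw [hB]
    simp only
    rw [abs_mul]
    calc |(s : ℝ)| * |if m ∈ L then (1:ℝ) else 0| ≤ M * 1 := by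
          apply mul_le_mul hsle _ (abs_nonneg _) hM0
          split <;> simp
      _ = M := mul_one M
  -- key sums
  have hsumA : ∑ m ∈ Finset.range (N + 1), (2:ℝ) ^ m * A m = ∑ i, (a i : ℝ) * x i := by
    rw [hA]
    simp only [Finset.mul_sum]
    rw [Finset.sum_comm]
    apply Finset.sum_congr rfl
    intro i _
    have : ∀ m, (2:ℝ) ^ m * (if m ∈ Li i then (si i : ℝ) * x i else 0)
        = if m ∈ Li i then (2:ℝ) ^ m * ((si i : ℝ) * x i) else 0 := by
      intro m; split <;> simp
    simp only [this]
    rw [Finset.sum_ite_mem, Finset.inter_eq_right.mpr (hLi i)]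
    have hai : (a i : ℝ) = (si i : ℝ) * ∑ l ∈ Li i, (2:ℝ) ^ l := by
      have := ha i
      push_cast [this]
      ring
    rw [hai, mul_comm ((si i : ℝ)) (∑ l ∈ Li i, (2:ℝ) ^ l), Finset.sum_mul,
      Finset.sum_mul]
    exact Finset.sum_congr rfl fun m _ => by ring
  have hsumB : ∑ m ∈ Finset.range (N + 1), (2:ℝ) ^ m * B m = (b : ℝ) := by
    rw [hB]
    simp only
    have : ∀ m, (2:ℝ) ^ m * ((s:ℝ) * (if m ∈ L then (1:ℝ) else 0))
        = if m ∈ L then (s:ℝ) * (2:ℝ) ^ m else 0 := by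
      intro m; split <;> simp <;> ring
    simp only [this]
    rw [Finset.sum_ite_mem, Finset.inter_eq_right.mpr hL, ← Finset.mul_sum]
    have : (b : ℝ) = (s : ℝ) * ∑ l ∈ L, (2:ℝ) ^ l := by push_cast [hb]; ring
    rw [this]
  have heN : e N = 0 := by
    have hnum : ∑ m ∈ Finset.range (N+1), (2:ℝ)^m * (A m - B m) = 0 := by
      have h1 : ∑ m ∈ Finset.range (N+1), (2:ℝ)^m * (A m - B m)
          = ∑ m ∈ Finset.range (N+1), (2:ℝ)^m * A m
            - ∑ m ∈ Finset.range (N+1), (2:ℝ)^m * B m := by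
        rw [← Finset.sum_sub_distrib]
        exact Finset.sum_congr rfl fun m _ => by ring
      rw [h1, hsumA, hsumB, heq, sub_self]
    rw [he]
    simp only
    rw [hnum, zero_div]
  -- recurrence
  have hrec : ∀ l, A l + (if l = 0 then 0 else e (l - 1)) - 2 * e l = B l := by
    intro l
    rcases Nat.eq_zero_or_pos l with h0 | h0
    · subst h0
      simp only [if_pos rfl, he]
      rw [Finset.sum_range_one]
      norm_num
      ring
    · rw [if_neg (Nat.pos_iff_ne_zero.mp h0)]
      obtain ⟨k, rfl⟩ := Nat.exists_eq_succ_of_ne_zero (Nat.pos_iff_ne_zero.mp h0)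
      have hT : e (k + 1)
          = (∑ m ∈ Finset.range (k + 1), (2:ℝ) ^ m * (A m - B m)
              + 2 ^ (k + 1) * (A (k + 1) - B (k + 1))) / 2 ^ (k + 1 + 1) := by
        rw [he]
        simp only
        rw [Finset.sum_range_succ]
      have hek : e k
          = (∑ m ∈ Finset.range (k + 1), (2:ℝ) ^ m * (A m - B m)) / 2 ^ (k + 1) := by
        rw [he]
      have hks : (k + 1 : ℕ).succ - 1 = k + 1 := rfl
      show A (k + 1) + e (k + 1 - 1) - 2 * e (k + 1) = B (k + 1)
      rw [Nat.add_sub_cancel, hT, hek]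
      have hp : (0:ℝ) < 2 ^ (k + 1) := by positivity
      have hpow : (2:ℝ) ^ (k + 1 + 1) = 2 * 2 ^ (k + 1) := by ring
      rw [hpow]
      field_simp
      ring
  -- bound on e
  have hebound : ∀ l, |e l| ≤ 2 * M * max 1 S := by
    intro l
    have hnum : |∑ m ∈ Finset.range (l + 1), (2:ℝ) ^ m * (A m - B m)|
        ≤ 2 ^ (l + 1) * (M * S + M) := by
      calc |∑ m ∈ Finset.range (l + 1), (2:ℝ) ^ m * (A m - B m)|
          ≤ ∑ m ∈ Finset.range (l + 1), |(2:ℝ) ^ m * (A m - B m)| :=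
            Finset.abs_sum_le_sum_abs _ _
        _ ≤ ∑ m ∈ Finset.range (l + 1), (2:ℝ) ^ m * (M * S + M) := by
            apply Finset.sum_le_sum
            intro m _
            rw [abs_mul, abs_pow, abs_two]
            apply mul_le_mul_of_nonneg_left _ (by positivity)
            calc |A m - B m| ≤ |A m| + |B m| := abs_sub _ _
              _ ≤ M * S + M := add_le_add (hAm m) (hBm m)
        _ = (∑ m ∈ Finset.range (l + 1), (2:ℝ) ^ m) * (M * S + M) := by
            rw [Finset.sum_mul]
        _ ≤ 2 ^ (l + 1) * (M * S + M) := by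
            apply mul_le_mul_of_nonneg_right _ (by positivity)
            rw [geom_sum_eq (by norm_num : (2:ℝ) ≠ 1) (l + 1)]
            have h2p : (0:ℝ) < 2 ^ (l + 1) := by positivity
            norm_num
      
    have h2 : (0:ℝ) < 2 ^ (l + 1) := by positivity
    rw [he]
    simp only
    rw [abs_div, abs_of_pos h2, div_le_iff₀ h2]
    calc |∑ m ∈ Finset.range (l + 1), (2:ℝ) ^ m * (A m - B m)|
        ≤ 2 ^ (l + 1) * (M * S + M) := hnum
      _ ≤ 2 ^ (l + 1) * (2 * M * max 1 S) := by
          apply mul_le_mul_of_nonneg_left _ (le_of_lt h2)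
          have h1 : M * S ≤ M * max 1 S := by
            apply mul_le_mul_of_nonneg_left (le_max_right _ _) hM0
          have h2 : M ≤ M * max 1 S := by
            nth_rewrite 1 [← mul_one M]
            apply mul_le_mul_of_nonneg_left (le_max_left _ _) hM0
          nlinarith
      _ = 2 * M * max 1 S * 2 ^ (l + 1) := by ring
  -- construct c and d
  refine ⟨fun l => if l < N then max (e l) 0 else 0,
          fun l => if l < N then max (-e l) 0 else 0, ?_, ?_, ?_, ?_, ?_⟩
  · intro l
    dsimp only
    constructor <;> split <;> simp [le_max_right]
  · simp
  · simp
  · intro l hl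
    dsimp only
    have hl' : l ≤ N := Nat.lt_succ_iff.mp (Finset.mem_range.mp hl)
    have hcd : ∀ m ≤ N, (if m < N then max (e m) 0 else 0)
        - (if m < N then max (-e m) 0 else 0) = e m := by
      intro m hm
      rcases lt_or_eq_of_le hm with h | h
      · rw [if_pos h, if_pos h, max_zero_sub_max_neg_zero_eq_self]
      · subst h; simp [heN]
    have h := hrec l
    simp only [hA, hB] at h
    rw [hcd l hl']
    rcases Nat.eq_zero_or_pos l with h0 | h0
    · subst h0
      simpa using h
    · rw [if_neg (Nat.pos_iff_ne_zero.mp h0)] at h ⊢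
      rw [hcd (l - 1) (le_trans (Nat.sub_le _ _) hl')]
      exact h
  · intro l
    dsimp only
    have h0 : (0:ℝ) ≤ 2 * M * max 1 S := by positivity
    constructor <;> split
    · exact max_le ((le_abs_self _).trans (hebound l)) h0
    · exact h0
    · exact max_le ((neg_le_abs _).trans (hebound l)) h0
    · exact h0
end

section
/- Let a ∈ ℤ^n with binary decompositions a(i) = s_i Σ_{l ∈ L_i} 2^l and b = s Σ_{l ∈ L} 2^l over bits 0,…,N. Suppose x ≥ 0 and reals c_l, d_l ≥ 0 satisfy, for every bit l ∈ {0,…,N}, |Σ_i 1[l ∈ L_i] s_i x(i) + (c_{l-1} - d_{l-1}) - 2(c_l - d_l) - s·1[l ∈ L]| ≤ ε (with c_{-1}=d_{-1}=c_N=d_N=0). Then |aᵀx - b| ≤ (2^0 + 2^1 + ⋯ + 2^N) ε ≤ 2^{N+1} ε. -/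
open Finset

lemma carry_tele (g : ℕ → ℝ) : ∀ m : ℕ,
    ∑ l ∈ Finset.range (m + 1), (2:ℝ)^l * ((if l = 0 then 0 else g (l-1)) - 2 * g l)
      = -(2:ℝ)^(m+1) * g m := by
  intro m
  induction m with
  | zero => simp
  | succ m ih =>
    rw [Finset.sum_range_succ, ih]
    simp only [Nat.succ_ne_zero, if_false, Nat.add_sub_cancel]
    ring

/-- Telescoping the per-bit errors of the bitwise decomposition. -/
theorem stmt_5 {n : ℕ} (a : Fin n → ℤ) (b : ℤ) (x : Fin n → ℝ) (ε : ℝ)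
    (hε : 0 ≤ ε) (hx : 0 ≤ x)
    (N : ℕ) (si : Fin n → ℤ) (Li : Fin n → Finset ℕ) (s : ℤ) (L : Finset ℕ)
    (hLi : ∀ i, Li i ⊆ Finset.range (N + 1)) (hL : L ⊆ Finset.range (N + 1))
    (ha : ∀ i, a i = si i * ∑ l ∈ Li i, (2 : ℤ) ^ l)
    (hb : b = s * ∑ l ∈ L, (2 : ℤ) ^ l)
    (c d : ℕ → ℝ) (hc : ∀ l, 0 ≤ c l) (hd : ∀ l, 0 ≤ d l)
    (hcN : c N = 0) (hdN : d N = 0)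
    (happrox : ∀ l ∈ Finset.range (N + 1),
      |(∑ i, if l ∈ Li i then (si i : ℝ) * x i else 0) +
        (if l = 0 then 0 else c (l - 1) - d (l - 1)) - 2 * (c l - d l) -
        (s : ℝ) * (if l ∈ L then 1 else 0)| ≤ ε) :
    |∑ i, (a i : ℝ) * x i - (b : ℝ)| ≤
        (∑ l ∈ Finset.range (N + 1), (2 : ℝ) ^ l) * ε ∧
      (∑ l ∈ Finset.range (N + 1), (2 : ℝ) ^ l) * ε ≤ 2 ^ (N + 1) * ε := by
  set E : ℕ → ℝ := fun l =>
    (∑ i, if l ∈ Li i then (si i : ℝ) * x i else 0) +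
      (if l = 0 then 0 else c (l - 1) - d (l - 1)) - 2 * (c l - d l) -
      (s : ℝ) * (if l ∈ L then 1 else 0) with hE
  have key : ∑ l ∈ Finset.range (N + 1), (2:ℝ)^l * E l
      = ∑ i, (a i : ℝ) * x i - (b : ℝ) := by
    have h1 : ∑ l ∈ Finset.range (N + 1),
        (2:ℝ)^l * (∑ i, if l ∈ Li i then (si i : ℝ) * x i else 0)
        = ∑ i, (a i : ℝ) * x i := by
      simp_rw [Finset.mul_sum]
      rw [Finset.sum_comm]
      refine Finset.sum_congr rfl fun i _ => ?_
      have : ∑ l ∈ Finset.range (N + 1), (2:ℝ)^l *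
          (if l ∈ Li i then (si i : ℝ) * x i else 0)
          = ∑ l ∈ Li i, (2:ℝ)^l * ((si i : ℝ) * x i) := by
        simp_rw [mul_ite, mul_zero]
        rw [Finset.sum_ite_mem, Finset.inter_eq_right.mpr (hLi i)]
      rw [this, ← Finset.sum_mul, ha i]
      push_cast
      ring
    have h2 : ∑ l ∈ Finset.range (N + 1),
        (2:ℝ)^l * ((s : ℝ) * (if l ∈ L then 1 else 0)) = (b : ℝ) := by
      have : ∑ l ∈ Finset.range (N + 1),
          (2:ℝ)^l * ((s : ℝ) * (if l ∈ L then 1 else 0))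
          = ∑ l ∈ L, (2:ℝ)^l * (s : ℝ) := by
        simp_rw [mul_ite, mul_one, mul_zero]
        rw [Finset.sum_ite_mem, Finset.inter_eq_right.mpr hL]
      rw [this, ← Finset.sum_mul, hb]
      push_cast
      ring
    have h3 := carry_tele (fun l => c l - d l) N
    calc ∑ l ∈ Finset.range (N + 1), (2:ℝ)^l * E l
        = (∑ l ∈ Finset.range (N + 1),
            (2:ℝ)^l * (∑ i, if l ∈ Li i then (si i : ℝ) * x i else 0))
          + (∑ l ∈ Finset.range (N + 1),
            (2:ℝ)^l * ((if l = 0 then 0 else c (l-1) - d (l-1)) - 2 * (c l - d l)))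
          - ∑ l ∈ Finset.range (N + 1),
            (2:ℝ)^l * ((s : ℝ) * (if l ∈ L then 1 else 0)) := by
          rw [← Finset.sum_add_distrib, ← Finset.sum_sub_distrib]
          refine Finset.sum_congr rfl fun l _ => ?_
          simp only [hE]; ring
      _ = ∑ i, (a i : ℝ) * x i - (b : ℝ) := by
          rw [h1, h2, h3, hcN, hdN]; ring
  constructor
  · rw [← key]
    calc |∑ l ∈ Finset.range (N + 1), (2:ℝ)^l * E l|
        ≤ ∑ l ∈ Finset.range (N + 1), |(2:ℝ)^l * E l| := Finset.abs_sum_le_sum_abs _ _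
      _ ≤ ∑ l ∈ Finset.range (N + 1), (2:ℝ)^l * ε := by
          refine Finset.sum_le_sum fun l hl => ?_
          rw [abs_mul, abs_pow, abs_two]
          exact mul_le_mul_of_nonneg_left (happrox l hl) (by positivity)
      _ = (∑ l ∈ Finset.range (N + 1), (2:ℝ)^l) * ε := by rw [Finset.sum_mul]
  · apply mul_le_mul_of_nonneg_right _ hε
    rw [geom_sum_eq (by norm_num : (2:ℝ) ≠ 1)]
    norm_num
end

section
/- Let A ∈ ℤ^{m×n} with entries in [-2, 2] and b ∈ ℤ^m, and suppose the system A x = b, x ≥ 0, is transformed by replacing each occurrence of coefficient ±2 on variable x(j) by ±(x(j) + x'(j)) with a fresh variable x'(j) and adding the equation x(j) - x'(j) = 0. Then the original system has a nonnegative solution if and only if the transformed system (with all coefficients in {-1, 0, 1}) has a nonnegative solution, and the map x ↦ (x, x' with x'(j) = x(j)) is a bijection between solution sets. -/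
open Finset

lemma key_6 (a : ℤ) (t : ℝ) :
    (if a = 2 then t + t else if a = -2 then -(t + t) else (a : ℝ) * t) = (a : ℝ) * t := by
  split_ifs with h1 h2
  · subst h1; push_cast; ring
  · subst h2; push_cast; ring
  · rfl

/-- 2-LEN to 1-LEN: replacing each ±2-coefficient variable by a duplicated pair. -/
theorem stmt_6 {m n : ℕ} (A : Matrix (Fin m) (Fin n) ℤ) (b : Fin m → ℤ)
    (hA : ∀ i j, -2 ≤ A i j ∧ A i j ≤ 2) :
    ((∃ x : Fin n → ℝ, 0 ≤ x ∧ ∀ i, ∑ j, (A i j : ℝ) * x j = (b i : ℝ)) ↔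
      (∃ p : (Fin n → ℝ) × (Fin n → ℝ), 0 ≤ p.1 ∧ 0 ≤ p.2 ∧
        (∀ i, ∑ j, (if A i j = 2 then p.1 j + p.2 j
            else if A i j = -2 then -(p.1 j + p.2 j)
            else (A i j : ℝ) * p.1 j) = (b i : ℝ)) ∧
        ∀ j, p.1 j - p.2 j = 0)) ∧
    ∃ F : {x : Fin n → ℝ // 0 ≤ x ∧ ∀ i, ∑ j, (A i j : ℝ) * x j = (b i : ℝ)} →
        {p : (Fin n → ℝ) × (Fin n → ℝ) // 0 ≤ p.1 ∧ 0 ≤ p.2 ∧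
          (∀ i, ∑ j, (if A i j = 2 then p.1 j + p.2 j
              else if A i j = -2 then -(p.1 j + p.2 j)
              else (A i j : ℝ) * p.1 j) = (b i : ℝ)) ∧
          ∀ j, p.1 j - p.2 j = 0},
      (∀ x, (F x).1 = (x.1, x.1)) ∧ Function.Bijective F := by
  refine ⟨⟨?_, ?_⟩, ?_⟩
  · rintro ⟨x, hx, hs⟩
    exact ⟨(x, x), hx, hx, fun i => by simp only [key_6]; exact hs i, fun j => sub_self _⟩
  · rintro ⟨p, h1, h2, h3, h4⟩
    have hp : p.2 = p.1 := funext fun j => by have := h4 j; linarith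
    refine ⟨p.1, h1, fun i => ?_⟩
    have := h3 i
    rw [hp] at this
    simp only [key_6] at this
    exact this
  · refine ⟨fun x => ⟨(x.1, x.1), x.2.1, x.2.1,
      fun i => by simp only [key_6]; exact x.2.2 i, fun j => sub_self _⟩,
      fun x => rfl, Function.bijective_iff_has_inverse.2
        ⟨fun p => ⟨p.1.1, p.2.1, fun i => ?_⟩, fun x => rfl, fun p => ?_⟩⟩
    · have := p.2.2.2.1 i
      have hp : p.1.2 = p.1.1 := funext fun j => by have := p.2.2.2.2 j; linarith
      rw [hp] at this
      simp only [key_6] at this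
      exact this
    · have hp : p.1.2 = p.1.1 := funext fun j => by have := p.2.2.2.2 j; linarith
      exact Subtype.ext (Prod.ext rfl hp.symm)
end

section
/- Let Â ∈ {-1,0,1}^{m×n}, b̂ ∈ ℤ^m, and consider the fixed homologous flow network with source s, sink t, and for each equation i vertices J_i^+, J_i^-: edges (s, J_i^+) for each j with Â(i,j)=1 and (s, J_i^-) for each j with Â(i,j)=-1 (edges for the same variable j across equations forming a homologous set), a fixed-flow edge (J_i^+, t) carrying exactly b̂(i), and a homologous pair of edges (J_i^+, t), (J_i^-, t). If x̂ ≥ 0 satisfies Â x̂ = b̂ and ‖x̂‖₁ ≤ R̂, and for each i we have 0 ≤ b̂(i) and b̂(i) + Σ_{j: Â(i,j)=-1} x̂(j) fits within capacity R̂, then assigning flow x̂(j) to every edge labeled by variable j, b̂(i) to the fixed edge, and Σ_{j: Â(i,j)=-1} x̂(j) to each edge of the homologous pair yields a feasible flow: flow conservation holds at every J_i^±, all homologous constraints are satisfied, and all fixed-flow constraints are satisfied. -/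
open Finset

/-- Edges of the fixed homologous flow network encoding `Â x̂ = b̂`:
`var i j` is the edge from the source into `J_i^±` labeled by variable `j`,
`fixedE i` is the fixed-flow edge `J_i^+ → t` carrying `b̂(i)`, and
`pos i`, `neg i` are the homologous pair `J_i^+ → t`, `J_i^- → t`. -/
inductive FHFEdge (m n : ℕ) where
  | var (i : Fin m) (j : Fin n)
  | fixedE (i : Fin m)
  | pos (i : Fin m)
  | neg (i : Fin m)

/-- An exact solution of a ±1 system yields an exact feasible fixed homologous flow. -/
theorem stmt_8 {m n : ℕ} (A : Matrix (Fin m) (Fin n) ℤ) (b : Fin m → ℤ) (R : ℝ)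
    (hA : ∀ i j, A i j = -1 ∨ A i j = 0 ∨ A i j = 1)
    (x : Fin n → ℝ) (hx : 0 ≤ x)
    (heq : ∀ i, ∑ j, (A i j : ℝ) * x j = (b i : ℝ))
    (hR : ∑ j, |x j| ≤ R)
    (hb : ∀ i, (0 : ℝ) ≤ (b i : ℝ) ∧
      (b i : ℝ) + ∑ j ∈ Finset.univ.filter (fun j => A i j = -1), x j ≤ R) :
    ∃ f : FHFEdge m n → ℝ,
      (∀ i j, f (.var i j) = x j) ∧
      (∀ i, f (.fixedE i) = (b i : ℝ)) ∧
      (∀ i, f (.pos i) = ∑ j ∈ Finset.univ.filter (fun j => A i j = -1), x j) ∧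
      (∀ i, f (.neg i) = f (.pos i)) ∧
      (∀ e, 0 ≤ f e) ∧
      (∀ i, ∑ j ∈ Finset.univ.filter (fun j => A i j = 1), f (.var i j)
          = f (.fixedE i) + f (.pos i)) ∧
      (∀ i, ∑ j ∈ Finset.univ.filter (fun j => A i j = -1), f (.var i j)
          = f (.neg i)) ∧
      (∀ i i' j, f (.var i j) = f (.var i' j)) ∧
      (∀ i, f (.pos i) = f (.neg i)) ∧
      (∀ i j, f (.var i j) ≤ R) ∧ (∀ i, f (.pos i) ≤ R) ∧ (∀ i, f (.neg i) ≤ R) := by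
  classical
  set S : Fin m → ℝ := fun i => ∑ j ∈ Finset.univ.filter (fun j => A i j = -1), x j with hS
  refine ⟨fun e => match e with
    | .var _ j => x j
    | .fixedE i => (b i : ℝ)
    | .pos i => S i
    | .neg i => S i, fun _ _ => rfl, fun _ => rfl, fun _ => rfl, fun _ => rfl, ?_, ?_, fun _ => rfl,
    fun _ _ _ => rfl, fun _ => rfl, ?_, ?_, ?_⟩
  · rintro (⟨i,j⟩|i|i|i)
    · exact hx j
    · exact (hb i).1
    · exact Finset.sum_nonneg fun j _ => hx j
    · exact Finset.sum_nonneg fun j _ => hx j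
  · intro i
    have key : ∑ j, (A i j : ℝ) * x j =
        (∑ j ∈ Finset.univ.filter (fun j => A i j = 1), x j) - S i := by
      rw [hS]
      rw [← Finset.sum_filter_add_sum_filter_not Finset.univ (fun j => A i j = 1)
        (fun j => (A i j : ℝ) * x j)]
      rw [← Finset.sum_filter_add_sum_filter_not (Finset.univ.filter (fun j => ¬ A i j = 1))
        (fun j => A i j = -1) (fun j => (A i j : ℝ) * x j)]
      rw [Finset.filter_filter, Finset.filter_filter]
      have h1 : ∑ j ∈ Finset.univ.filter (fun j => A i j = 1), (A i j : ℝ) * x j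
          = ∑ j ∈ Finset.univ.filter (fun j => A i j = 1), x j := by
        apply Finset.sum_congr rfl; intro j hj
        simp only [Finset.mem_filter] at hj; rw [hj.2]; push_cast; ring
      have h2 : ∑ j ∈ Finset.univ.filter (fun j => ¬ A i j = 1 ∧ A i j = -1), (A i j : ℝ) * x j
          = -∑ j ∈ Finset.univ.filter (fun j => A i j = -1), x j := by
        have hset : Finset.univ.filter (fun j => ¬ A i j = 1 ∧ A i j = -1)
            = Finset.univ.filter (fun j => A i j = -1) := by
          ext j; simp only [Finset.mem_filter, Finset.mem_univ, true_and]
          constructor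
          · exact fun h => h.2
          · intro h2; exact ⟨by rw [h2]; decide, h2⟩
        rw [hset, ← Finset.sum_neg_distrib]
        apply Finset.sum_congr rfl
        intro j hj; simp only [Finset.mem_filter] at hj; rw [hj.2]; push_cast; ring
      have h3 : ∑ j ∈ Finset.univ.filter (fun j => ¬ A i j = 1 ∧ ¬ A i j = -1), (A i j : ℝ) * x j
          = 0 := by
        apply Finset.sum_eq_zero; intro j hj
        simp only [Finset.mem_filter] at hj
        rcases hA i j with h | h | h
        · exact absurd h hj.2.2
        · rw [h]; push_cast; ring
        · exact absurd h hj.2.1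
      rw [h1, h2, h3]; ring
    have := heq i
    rw [key] at this
    linarith
  · intro i j
    have : |x j| ≤ ∑ k, |x k| :=
      Finset.single_le_sum (fun k _ => abs_nonneg (x k)) (Finset.mem_univ j)
    rw [abs_of_nonneg (hx j)] at this
    linarith
  · intro i; have := hb i; linarith [this.1, this.2]
  · intro i; have := hb i; linarith [this.1, this.2]
end

section
/- In the flow network encoding of Â x̂ = b̂ (Â ∈ {-1,0,1}^{m×n}), suppose f is an approximate flow with: |f(e₁) - f(e₂)| ≤ ε for all homologous edges, |f(fixed edge b̂_i) - b̂(i)| ≤ ε, and demand violation at every internal vertex at most ε. Define x̂(j) = f(x̂_i^j) for an arbitrary equation i containing variable j. Then for every equation q, |â_qᵀ x̂ - b̂(q)| ≤ (‖â_q‖₁ + 4) ε ≤ 5 n X ε, where X = max(‖Â‖_max, ‖b̂‖_max, 1). -/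
open Finset

/-- Error analysis of recovering a 1-LEN approximate solution from an
approximate fixed homologous flow. -/
theorem stmt_9 {m n : ℕ} (hn : 1 ≤ n)
    (A : Matrix (Fin m) (Fin n) ℤ) (b : Fin m → ℤ) (ε : ℝ) (hε : 0 ≤ ε)
    (hA : ∀ i j, A i j = -1 ∨ A i j = 0 ∨ A i j = 1)
    (X : ℝ)
    (hX : X = max (max (⨆ p : Fin m × Fin n, |(A p.1 p.2 : ℝ)|)
        (⨆ i, |(b i : ℝ)|)) 1)
    (g : Fin m → Fin n → ℝ) (ffix fpos fneg : Fin m → ℝ)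
    (hgnn : ∀ i j, 0 ≤ g i j) (hfixnn : ∀ i, 0 ≤ ffix i)
    (hposnn : ∀ i, 0 ≤ fpos i) (hnegnn : ∀ i, 0 ≤ fneg i)
    (hhom : ∀ i i' j, A i j ≠ 0 → A i' j ≠ 0 → |g i j - g i' j| ≤ ε)
    (hpairhom : ∀ i, |fpos i - fneg i| ≤ ε)
    (hfixerr : ∀ i, |ffix i - (b i : ℝ)| ≤ ε)
    (hdemp : ∀ i, |∑ j ∈ Finset.univ.filter (fun j => A i j = 1), g i j -
        (ffix i + fpos i)| ≤ ε)
    (hdemn : ∀ i, |∑ j ∈ Finset.univ.filter (fun j => A i j = -1), g i j -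
        fneg i| ≤ ε)
    (i₀ : Fin n → Fin m) (hi₀ : ∀ j, A (i₀ j) j ≠ 0) :
    ∀ q, |∑ j, (A q j : ℝ) * g (i₀ j) j - (b q : ℝ)| ≤
        (∑ j, |(A q j : ℝ)| + 4) * ε ∧
      (∑ j, |(A q j : ℝ)| + 4) * ε ≤ 5 * n * X * ε := by
  intro q
  have hX1 : 1 ≤ X := by rw [hX]; exact le_max_right _ _
  set Sp := ∑ j ∈ Finset.univ.filter (fun j => A q j = 1), g q j with hSp
  set Sn := ∑ j ∈ Finset.univ.filter (fun j => A q j = -1), g q j with hSn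
  set T := ∑ j, (A q j : ℝ) * (g (i₀ j) j - g q j) with hT
  have habs1 : ∀ j, |(A q j : ℝ)| ≤ 1 := by
    intro j; rcases hA q j with h | h | h <;> simp [h]
  -- |T| ≤ (∑ |A q j|) * ε
  have hTbound : |T| ≤ (∑ j, |(A q j : ℝ)|) * ε := by
    rw [hT, Finset.sum_mul]
    refine (Finset.abs_sum_le_sum_abs _ _).trans (Finset.sum_le_sum ?_)
    intro j _
    rw [abs_mul]
    by_cases h : A q j = 0
    · simp [h]
    · exact mul_le_mul_of_nonneg_left (hhom (i₀ j) q j (hi₀ j) h) (abs_nonneg _)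
  -- ∑ A q j * g q j = Sp - Sn
  have hsplit : ∑ j, (A q j : ℝ) * g q j = Sp - Sn := by
    have : ∀ j, (A q j : ℝ) * g q j =
        (if A q j = 1 then g q j else 0) - (if A q j = -1 then g q j else 0) := by
      intro j
      rcases hA q j with h | h | h <;> simp [h]
    rw [Finset.sum_congr rfl (fun j _ => this j), Finset.sum_sub_distrib]
    simp [hSp, hSn, Finset.sum_filter]
  have hdecomp : ∑ j, (A q j : ℝ) * g (i₀ j) j - (b q : ℝ) =
      T + (Sp - (ffix q + fpos q)) - (Sn - fneg q) + (ffix q - (b q : ℝ))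
        + (fpos q - fneg q) := by
    have h1 : ∑ j, (A q j : ℝ) * g (i₀ j) j = T + (Sp - Sn) := by
      rw [hT, ← hsplit, ← Finset.sum_add_distrib]
      exact Finset.sum_congr rfl (fun j _ => by ring)
    rw [h1]; ring
  constructor
  · rw [hdecomp]
    have h1 := hdemp q
    have h2 := hdemn q
    have h3 := hfixerr q
    have h4 := hpairhom q
    calc |T + (Sp - (ffix q + fpos q)) - (Sn - fneg q) + (ffix q - (b q : ℝ))
          + (fpos q - fneg q)|
        ≤ |T| + |Sp - (ffix q + fpos q)| + |Sn - fneg q| + |ffix q - (b q : ℝ)|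
          + |fpos q - fneg q| := by
          calc _ ≤ |T + (Sp - (ffix q + fpos q)) - (Sn - fneg q) + (ffix q - (b q : ℝ))|
                + |fpos q - fneg q| := abs_add_le _ _
            _ ≤ |T + (Sp - (ffix q + fpos q)) - (Sn - fneg q)| + |ffix q - (b q : ℝ)|
                + |fpos q - fneg q| := by linarith [abs_add_le (T + (Sp - (ffix q + fpos q)) - (Sn - fneg q)) (ffix q - (b q : ℝ))]
            _ ≤ |T + (Sp - (ffix q + fpos q))| + |Sn - fneg q| + |ffix q - (b q : ℝ)|
                + |fpos q - fneg q| := by linarith [abs_sub (T + (Sp - (ffix q + fpos q))) (Sn - fneg q)]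
            _ ≤ _ := by linarith [abs_add_le T (Sp - (ffix q + fpos q))]
      _ ≤ (∑ j, |(A q j : ℝ)|) * ε + ε + ε + ε + ε := by
          exact add_le_add (add_le_add (add_le_add (add_le_add hTbound h1) h2) h3) h4
      _ = (∑ j, |(A q j : ℝ)| + 4) * ε := by ring
  · have hsum : ∑ j, |(A q j : ℝ)| ≤ (n : ℝ) := by
      calc ∑ j, |(A q j : ℝ)| ≤ ∑ _j : Fin n, (1 : ℝ) :=
            Finset.sum_le_sum (fun j _ => habs1 j)
        _ = (n : ℝ) := by simp
    have hn' : (1 : ℝ) ≤ n := by exact_mod_cast hn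
    have h5 : ∑ j, |(A q j : ℝ)| + 4 ≤ 5 * n * X := by
      have : (n : ℝ) ≤ n * X := le_mul_of_one_le_right (by linarith) hX1
      nlinarith
    exact mul_le_mul_of_nonneg_right h5 hε
end

section
/- Suppose a 2-commodity flow (f₁, f₂) on a network with sources s̄₁, s̄₂ (each reachable only through a single edge (s̿_i, s̄_i) of capacity R_i) satisfies: total throughput F₁ + F₂ = R₁ + R₂; per-edge congestion error at most ε so f_i(s̿_i, s̄_i) ≤ R_i + ε; and demand errors |f_i(s̿_i, s̄_i) - F_i| ≤ ε at s̿_i and |f_i(s̿_i, s̄_i) - Σ_w f_i(s̄_i, w)| ≤ ε at s̄_i. Then |F_i - R_i| ≤ 2ε and |Σ_w f_i(s̄_i, w) - R_i| ≤ 4ε for each i ∈ {1,2}. -/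
/-- A sum-throughput requirement plus individual capacity caps forces each
commodity close to its individual requirement. -/
theorem stmt_14 (ε R1 R2 F1 F2 fin1 fin2 out1 out2 : ℝ) (hε : 0 ≤ ε)
    (hsum : F1 + F2 = R1 + R2)
    (hcap1 : fin1 ≤ R1 + ε) (hcap2 : fin2 ≤ R2 + ε)
    (hd1 : |fin1 - F1| ≤ ε) (hd2 : |fin2 - F2| ≤ ε)
    (ho1 : |fin1 - out1| ≤ ε) (ho2 : |fin2 - out2| ≤ ε) :
    (|F1 - R1| ≤ 2 * ε ∧ |F2 - R2| ≤ 2 * ε) ∧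
      (|out1 - R1| ≤ 4 * ε ∧ |out2 - R2| ≤ 4 * ε) := by
  simp only [abs_le] at *
  refine ⟨⟨⟨?_, ?_⟩, ⟨?_, ?_⟩⟩, ⟨?_, ?_⟩, ⟨?_, ?_⟩⟩ <;> linarith
end

section
/- Let f be a nonnegative flow on a directed graph G = (V, E) with distinguished vertices s, t, and suppose a homologous edge set of size k is encoded as k-1 chained pairwise constraints via inserted degree-2 vertices. If f is an exact feasible flow in the pairwise-constrained network (exact conservation, exact pairwise equalities, capacities respected, fixed-flow edges exact), then contracting each inserted degree-2 vertex (assigning to the original edge the common flow value of its two pieces) yields an exact feasible flow in the original fixed-homologous network: all size-k homologous sets carry equal flow, conservation holds at all original internal vertices, and all capacity and fixed-flow constraints are satisfied. -/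
open Finset

/-- Contracting the inserted degree-2 vertices of a pairwise-chained
homologous set yields an exact feasible fixed homologous flow. -/
theorem stmt_17 {V E₀ : Type*} [Fintype V] [DecidableEq V] [Fintype E₀]
    (src₀ dst₀ : E₀ → V) (cap₀ : E₀ → ℝ) (F₀ : Set E₀)
    (s t : V) (k : ℕ) (hk : 2 ≤ k)
    (hsrc hdst : Fin k → V) (hcap : Fin k → ℝ)
    (g : E₀ → ℝ) (p q : Fin k → ℝ)
    (hgnn : ∀ e, 0 ≤ g e) (hpnn : ∀ i, 0 ≤ p i)
    (hdeg2 : ∀ i, p i = q i)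
    (hchain : ∀ i : ℕ, (h : i + 1 < k) → q ⟨i, by omega⟩ = p ⟨i + 1, h⟩)
    (hcons : ∀ v, v ≠ s → v ≠ t →
      ∑ e ∈ Finset.univ.filter (fun e => dst₀ e = v), g e +
        ∑ i ∈ Finset.univ.filter (fun i => hdst i = v), q i =
      ∑ e ∈ Finset.univ.filter (fun e => src₀ e = v), g e +
        ∑ i ∈ Finset.univ.filter (fun i => hsrc i = v), p i)
    (hcapg : ∀ e, g e ≤ cap₀ e) (hcapp : ∀ i, p i ≤ hcap i)
    (hcapq : ∀ i, q i ≤ hcap i)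
    (hfix : ∀ e ∈ F₀, g e = cap₀ e) :
    (∀ i j, p i = p j) ∧
    (∀ v, v ≠ s → v ≠ t →
      ∑ e ∈ Finset.univ.filter (fun e => dst₀ e = v), g e +
        ∑ i ∈ Finset.univ.filter (fun i => hdst i = v), p i =
      ∑ e ∈ Finset.univ.filter (fun e => src₀ e = v), g e +
        ∑ i ∈ Finset.univ.filter (fun i => hsrc i = v), p i) ∧
    (∀ e, g e ≤ cap₀ e) ∧ (∀ i, p i ≤ hcap i) ∧ (∀ e ∈ F₀, g e = cap₀ e) ∧
    (∀ e, 0 ≤ g e) ∧ (∀ i, 0 ≤ p i) := by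
  have key : ∀ n : ℕ, (h : n < k) → p ⟨n, h⟩ = p ⟨0, by omega⟩ := by
    intro n
    induction n with
    | zero => intro h; rfl
    | succ m ih =>
      intro h
      have hm : m < k := by omega
      rw [← hchain m h, ← hdeg2, ih hm]
  refine ⟨?_, ?_, hcapg, hcapp, hfix, hgnn, hpnn⟩
  · intro i j
    have := key i.1 i.2
    have := key j.1 j.2
    simp only [Fin.eta] at *
    linarith
  · intro v hs ht
    have h := hcons v hs ht
    have : ∑ i ∈ Finset.univ.filter (fun i => hdst i = v), q i =
        ∑ i ∈ Finset.univ.filter (fun i => hdst i = v), p i :=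
      Finset.sum_congr rfl (fun i _ => (hdeg2 i).symm)
    linarith
end
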